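/- arXiv:2603.28094 — 3 statements merged into one kernel-verified Lean document; each statement's English description precedes it below -/
import Mathlib

section
/- Let V be a module over gl(p+q|n) with a positive-definite Hermitian form contravariant with respect to the star-operation of u(p,q|n), and let v be a nonzero weight vector with weight λ = Σ λ_i ε_i + Σ ω_μ δ_μ. Then λ_i ≤ −ω_μ for all 1 ≤ i ≤ p and 1 ≤ μ ≤ n, and −ω_μ ≤ λ_j for all p+1 ≤ j ≤ p+q and 1 ≤ μ ≤ n. -/
/-- Parity of an index of gl(m|n): even (0) if it is `< m`, odd (1) otherwise. -/
def glPar (m : ℕ) {N : ℕ} (a : Fin N) : ℕ := if (a : ℕ) < m then 0 else 1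

/-- Let `V` be a module over gl(p+q|n) (given by the operators `π a b` of the matrix
units `E_{ab}`, satisfying the super-commutation relations), with a positive-definite
Hermitian form contravariant with respect to the star-operation of u(p,q|n)
(signs `+E_{ba}` when a,b are both ≤ p or both > p, and `−E_{ba}` otherwise).
If `v` is a nonzero weight vector with weight coordinates `wt`, then
`λ_i ≤ −ω_μ` for `i ≤ p` and `−ω_μ ≤ λ_j` for `p < j ≤ p+q`. -/
theorem weight_inequalities (p q n : ℕ) (hp : 1 ≤ p) (hq : 1 ≤ q) (hn : 1 ≤ n)
    {V : Type*} [AddCommGroup V] [Module ℂ V]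
    (π : Fin (p+q+n) → Fin (p+q+n) → V →ₗ[ℂ] V)
    (hrel : ∀ a b c d : Fin (p+q+n),
      (π a b) ∘ₗ (π c d)
          - ((-1 : ℂ) ^ ((glPar (p+q) a + glPar (p+q) b) * (glPar (p+q) c + glPar (p+q) d)))
              • ((π c d) ∘ₗ (π a b))
        = (if b = c then π a d else 0)
          - ((-1 : ℂ) ^ ((glPar (p+q) a + glPar (p+q) b) * (glPar (p+q) c + glPar (p+q) d)))
              • (if d = a then π c b else 0))
    (B : V →ₛₗ[starRingEnd ℂ] V →ₗ[ℂ] ℂ)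
    (hherm : ∀ v w : V, B v w = (starRingEnd ℂ) (B w v))
    (hpos : ∀ v : V, v ≠ 0 → 0 < (B v v).re)
    (hcontra : ∀ (a b : Fin (p+q+n)) (v w : V),
      B (π a b v) w
        = (if ((a : ℕ) < p ∧ (b : ℕ) < p) ∨ (p ≤ (a : ℕ) ∧ p ≤ (b : ℕ)) then (1 : ℂ) else -1)
            * B v (π b a w))
    (v : V) (hv : v ≠ 0) (wt : Fin (p+q+n) → ℝ)
    (hwt : ∀ a, π a a v = ((wt a : ℂ)) • v) :
    (∀ i a : Fin (p+q+n), (i : ℕ) < p → p + q ≤ (a : ℕ) → wt i ≤ - wt a) ∧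
    (∀ j a : Fin (p+q+n), p ≤ (j : ℕ) → (j : ℕ) < p + q → p + q ≤ (a : ℕ) → - wt a ≤ wt j) := by
  -- The form is nonnegative on every vector
  have hnonneg : ∀ w : V, 0 ≤ (B w w).re := by
    intro w
    by_cases hw : w = 0
    · simp [hw]
    · exact le_of_lt (hpos w hw)
  have hBvv : 0 < (B v v).re := hpos v hv
  -- main computation
  have main : ∀ i a : Fin (p+q+n), (i : ℕ) < p + q → p + q ≤ (a : ℕ) →
      (if p ≤ (i : ℕ) then (1 : ℂ) else -1) *
        (B (π a i v) (π a i v) + B (π i a v) (π i a v))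
      = ((wt i + wt a : ℝ) : ℂ) * B v v := by
    intro i a hi ha
    have hgi : glPar (p+q) i = 0 := by simp [glPar, hi]
    have hga : glPar (p+q) a = 1 := by simp [glPar, not_lt.2 ha]
    have hrel' := hrel i a a i
    rw [hgi, hga] at hrel'
    norm_num at hrel'
    -- hrel' should now be the anticommutator relation
    have h1 := LinearMap.congr_fun hrel' v
    simp only [LinearMap.add_apply, LinearMap.comp_apply] at h1
    rw [hwt i, hwt a] at h1
    -- apply B · v
    have h2 := congrArg (fun x => B x v) h1
    simp only [map_add, LinearMap.add_apply, map_smulₛₗ, LinearMap.smul_apply] at h2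
    have hia : ¬ ((a : ℕ) < p) := by omega
    have hsign1 : (if ((i : ℕ) < p ∧ (a : ℕ) < p) ∨ (p ≤ (i : ℕ) ∧ p ≤ (a : ℕ))
        then (1 : ℂ) else -1) = (if p ≤ (i : ℕ) then (1 : ℂ) else -1) := by
      by_cases h : p ≤ (i : ℕ) <;> simp [h, hia] <;> omega
    have hsign2 : (if ((a : ℕ) < p ∧ (i : ℕ) < p) ∨ (p ≤ (a : ℕ) ∧ p ≤ (i : ℕ))
        then (1 : ℂ) else -1) = (if p ≤ (i : ℕ) then (1 : ℂ) else -1) := by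
      by_cases h : p ≤ (i : ℕ) <;> simp [h, hia] <;> omega
    rw [hcontra i a (π a i v) v, hcontra a i (π i a v) v, hsign1, hsign2] at h2
    have hc : (starRingEnd ℂ) ((wt i : ℂ)) = (wt i : ℂ) := Complex.conj_ofReal _
    have hc' : (starRingEnd ℂ) ((wt a : ℂ)) = (wt a : ℂ) := Complex.conj_ofReal _
    rw [hc, hc'] at h2
    simp only [smul_eq_mul] at h2
    push_cast
    linear_combination h2
  obtain ⟨i1, hi1⟩ : ∃ i1 : Fin (p+q+n), True := ⟨⟨0, by omega⟩, trivial⟩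
  constructor
  · intro i a hi ha
    have h := main i a (by omega) ha
    rw [if_neg (by omega : ¬ p ≤ (i : ℕ))] at h
    have hre := congrArg Complex.re h
    simp only [neg_one_mul, Complex.neg_re, Complex.add_re, Complex.re_ofReal_mul] at hre
    have hN1 := hnonneg (π a i v)
    have hN2 := hnonneg (π i a v)
    nlinarith [hBvv]
  · intro j a hj hj' ha
    have h := main j a (by omega) ha
    rw [if_pos hj] at h
    have hre := congrArg Complex.re h
    simp only [one_mul, Complex.add_re, Complex.re_ofReal_mul] at hre
    have hN1 := hnonneg (π a j v)
    have hN2 := hnonneg (π j a v)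
    nlinarith [hBvv]
end

section
/- Let Λ = (λ_1,…,λ_{p+q}, ω_1,…,ω_n) be a Φ⁺_c-dominant integral weight and suppose the Hermitian form on the highest-weight module V(Λ) is contravariant and positive-definite on a neighbourhood of the highest-weight vector (in particular ⟨v_Λ, v_Λ⟩ > 0 and ⟨Xv_Λ, Xv_Λ⟩ ≥ 0 for root vectors X). Then: (1) (Λ, α) ≥ 0 for all compact positive roots α; (2) (Λ, β) ≤ 0 for all non-compact positive roots β; (3) λ_{p+1} ≥ … ≥ λ_{p+q} ≥ −ω_n ≥ … ≥ −ω_1 ≥ λ_1 ≥ … ≥ λ_p. -/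
/-- Let Λ (coordinates `wt`: λ's at indices < p+q, ω's at indices ≥ p+q) be a
Φ⁺_c-dominant integral weight, `v` a highest-weight vector of weight Λ in the module
V(Λ) over gl(p+q|n), and suppose the contravariant Hermitian form is positive on `v`
and positive-semidefinite on the vectors `π a b v`. Then:
(1) (Λ,α) ≥ 0 for all compact positive roots α;
(2) (Λ,β) ≤ 0 for all non-compact positive roots β;
(3) λ_{p+1} ≥ … ≥ λ_{p+q} ≥ −ω_n ≥ … ≥ −ω_1 ≥ λ_1 ≥ … ≥ λ_p. -/
theorem unitary_highest_weight_inequalities (p q n : ℕ)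
    (hp : 1 ≤ p) (hq : 1 ≤ q) (hn : 1 ≤ n)
    {V : Type*} [AddCommGroup V] [Module ℂ V]
    (π : Fin (p+q+n) → Fin (p+q+n) → V →ₗ[ℂ] V)
    (hrel : ∀ a b c d : Fin (p+q+n),
      (π a b) ∘ₗ (π c d)
          - ((-1 : ℂ) ^ ((glPar (p+q) a + glPar (p+q) b) * (glPar (p+q) c + glPar (p+q) d)))
              • ((π c d) ∘ₗ (π a b))
        = (if b = c then π a d else 0)
          - ((-1 : ℂ) ^ ((glPar (p+q) a + glPar (p+q) b) * (glPar (p+q) c + glPar (p+q) d)))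
              • (if d = a then π c b else 0))
    (B : V →ₛₗ[starRingEnd ℂ] V →ₗ[ℂ] ℂ)
    (hherm : ∀ v w : V, B v w = (starRingEnd ℂ) (B w v))
    (hcontra : ∀ (a b : Fin (p+q+n)) (v w : V),
      B (π a b v) w
        = (if ((a : ℕ) < p ∧ (b : ℕ) < p) ∨ (p ≤ (a : ℕ) ∧ p ≤ (b : ℕ)) then (1 : ℂ) else -1)
            * B v (π b a w))
    (v : V) (wt : Fin (p+q+n) → ℝ)
    -- v is a weight vector of weight Λ = wt, annihilated by all raising operators
    (hwt : ∀ a, π a a v = ((wt a : ℂ)) • v)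
    (hhw : ∀ a b : Fin (p+q+n), (a : ℕ) < (b : ℕ) → π a b v = 0)
    -- Λ is Φ⁺_c-dominant integral
    (hdoml : ∀ i j : Fin (p+q+n), (i : ℕ) + 1 = (j : ℕ) →
      ((j : ℕ) < p ∨ (p ≤ (i : ℕ) ∧ (j : ℕ) < p + q)) → ∃ k : ℕ, wt i - wt j = k)
    (hdomo : ∀ μ ν : Fin (p+q+n), p + q ≤ (μ : ℕ) → (μ : ℕ) + 1 = (ν : ℕ) →
      ∃ k : ℕ, wt μ - wt ν = k)
    -- positivity near the highest-weight vector
    (hv : 0 < (B v v).re ∧ (B v v).im = 0)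
    (hXv : ∀ a b : Fin (p+q+n),
      0 ≤ (B (π a b v) (π a b v)).re ∧ (B (π a b v) (π a b v)).im = 0) :
    -- (1) (Λ, α) ≥ 0 for all compact positive roots α
    ((∀ i j : Fin (p+q+n), (i : ℕ) < (j : ℕ) →
        ((j : ℕ) < p ∨ (p ≤ (i : ℕ) ∧ (j : ℕ) < p + q)) → 0 ≤ wt i - wt j) ∧
     (∀ μ ν : Fin (p+q+n), p + q ≤ (μ : ℕ) → (μ : ℕ) < (ν : ℕ) → 0 ≤ wt μ - wt ν) ∧
     (∀ i μ : Fin (p+q+n), p ≤ (i : ℕ) → (i : ℕ) < p + q → p + q ≤ (μ : ℕ) →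
        0 ≤ wt i + wt μ)) ∧
    -- (2) (Λ, β) ≤ 0 for all non-compact positive roots β
    ((∀ i j : Fin (p+q+n), (i : ℕ) < p → p ≤ (j : ℕ) → (j : ℕ) < p + q →
        wt i - wt j ≤ 0) ∧
     (∀ i μ : Fin (p+q+n), (i : ℕ) < p → p + q ≤ (μ : ℕ) → wt i + wt μ ≤ 0)) ∧
    -- (3) the chain λ_{p+1} ≥ … ≥ λ_{p+q} ≥ −ω_n ≥ … ≥ −ω_1 ≥ λ_1 ≥ … ≥ λ_p
    ((∀ j j' : Fin (p+q+n), p ≤ (j : ℕ) → (j : ℕ) ≤ (j' : ℕ) → (j' : ℕ) < p + q →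
        wt j' ≤ wt j) ∧
     (∀ j a : Fin (p+q+n), p ≤ (j : ℕ) → (j : ℕ) < p + q → p + q ≤ (a : ℕ) →
        - wt a ≤ wt j) ∧
     (∀ a a' : Fin (p+q+n), p + q ≤ (a : ℕ) → (a : ℕ) ≤ (a' : ℕ) →
        - wt a ≤ - wt a') ∧
     (∀ i a : Fin (p+q+n), (i : ℕ) < p → p + q ≤ (a : ℕ) → wt i ≤ - wt a) ∧
     (∀ i i' : Fin (p+q+n), (i : ℕ) ≤ (i' : ℕ) → (i' : ℕ) < p → wt i' ≤ wt i)) := by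
  -- Key lemma: for any a < b, positivity of B on π b a v gives an inequality.
  have key : ∀ a b : Fin (p+q+n), (a : ℕ) < (b : ℕ) →
      0 ≤ (if ((b : ℕ) < p ∧ (a : ℕ) < p) ∨ (p ≤ (b : ℕ) ∧ p ≤ (a : ℕ)) then (1:ℝ) else -1) *
          (wt a - (if (((a : ℕ) < p + q) ↔ ((b : ℕ) < p + q)) then (1:ℝ) else -1) * wt b) := by
    intro a b hab
    set e : ℝ := if (((a : ℕ) < p + q) ↔ ((b : ℕ) < p + q)) then (1:ℝ) else -1 with he
    set s : ℝ := if ((b : ℕ) < p ∧ (a : ℕ) < p) ∨ (p ≤ (b : ℕ) ∧ p ≤ (a : ℕ)) then (1:ℝ) else -1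
      with hs
    have hε : ((-1 : ℂ) ^ ((glPar (p+q) a + glPar (p+q) b) * (glPar (p+q) b + glPar (p+q) a)))
        = (e : ℂ) := by
      rw [he]; unfold glPar
      by_cases h1 : (a : ℕ) < p + q <;> by_cases h2 : (b : ℕ) < p + q <;>
        simp [h1, h2] <;> norm_num
    have h1 := DFunLike.congr_fun (hrel a b b a) v
    rw [hε] at h1
    simp only [LinearMap.sub_apply, LinearMap.comp_apply, LinearMap.smul_apply,
      eq_self_iff_true, if_true, LinearMap.zero_apply] at h1
    rw [hhw a b hab, map_zero, smul_zero, sub_zero, hwt a, hwt b] at h1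
    have h1' : π a b (π b a v) = (((wt a - e * wt b : ℝ) : ℂ)) • v := by
      rw [h1, smul_smul]
      push_cast
      rw [← sub_smul]
    have h2 := hcontra b a v (π b a v)
    rw [h1', map_smul] at h2
    have hS : (if ((b : ℕ) < p ∧ (a : ℕ) < p) ∨ (p ≤ (b : ℕ) ∧ p ≤ (a : ℕ))
        then (1 : ℂ) else -1) = (s : ℂ) := by
      rw [hs]; split <;> simp
    rw [hS] at h2
    have h3 : B (π b a v) (π b a v) = ((s * (wt a - e * wt b) : ℝ) : ℂ) * B v v := by
      rw [h2, smul_eq_mul]; push_cast; ring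
    have h4 : 0 ≤ s * (wt a - e * wt b) * (B v v).re := by
      have := (hXv b a).1
      rw [h3] at this
      simpa [Complex.re_ofReal_mul] using this
    exact nonneg_of_mul_nonneg_right (by linarith [h4] : 0 ≤ ((B v) v).re * (s * (wt a - e * wt b))) hv.1
  have k1 : ∀ a b : Fin (p+q+n), (a : ℕ) < (b : ℕ) →
      ((b : ℕ) < p ∨ (p ≤ (a : ℕ) ∧ (b : ℕ) < p + q)) → 0 ≤ wt a - wt b := by
    intro a b hab hc
    have h := key a b hab
    rw [if_pos (by omega), if_pos (by omega)] at h
    linarith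
  have k2 : ∀ a b : Fin (p+q+n), p + q ≤ (a : ℕ) → (a : ℕ) < (b : ℕ) →
      0 ≤ wt a - wt b := by
    intro a b ha hab
    have h := key a b hab
    rw [if_pos (Or.inr ⟨by omega, by omega⟩), if_pos (by omega)] at h
    linarith
  have k3 : ∀ a b : Fin (p+q+n), p ≤ (a : ℕ) → (a : ℕ) < p + q → p + q ≤ (b : ℕ) →
      0 ≤ wt a + wt b := by
    intro a b h1 h2 h3
    have h := key a b (by omega)
    rw [if_pos (Or.inr ⟨by omega, h1⟩), if_neg (by omega)] at h
    linarith
  have k4 : ∀ a b : Fin (p+q+n), (a : ℕ) < p → p ≤ (b : ℕ) → (b : ℕ) < p + q →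
      wt a - wt b ≤ 0 := by
    intro a b h1 h2 h3
    have h := key a b (by omega)
    rw [if_neg (by omega), if_pos (by omega)] at h
    linarith
  have k5 : ∀ a b : Fin (p+q+n), (a : ℕ) < p → p + q ≤ (b : ℕ) →
      wt a + wt b ≤ 0 := by
    intro a b h1 h2
    have h := key a b (by omega)
    rw [if_neg (by omega), if_neg (by omega)] at h
    linarith
  have veq : ∀ a b : Fin (p+q+n), (a : ℕ) = (b : ℕ) → wt a = wt b := by
    intro a b hab
    congr 1
    exact Fin.ext hab
  refine ⟨⟨?_, ?_, ?_⟩, ⟨?_, ?_⟩, ⟨?_, ?_, ?_, ?_, ?_⟩⟩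
  · intro i j hij hc; exact k1 i j hij hc
  · intro μ ν hμ hμν; exact k2 μ ν hμ hμν
  · intro i μ h1 h2 h3; exact k3 i μ h1 h2 h3
  · intro i j h1 h2 h3; exact k4 i j h1 h2 h3
  · intro i μ h1 h2; exact k5 i μ h1 h2
  · intro j j' h1 h2 h3
    rcases lt_or_eq_of_le h2 with h | h
    · have := k1 j j' h (Or.inr ⟨h1, h3⟩); linarith
    · rw [veq j j' h]
  · intro j a h1 h2 h3
    have := k3 j a h1 h2 h3; linarith
  · intro a a' h1 h2
    rcases lt_or_eq_of_le h2 with h | h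
    · have := k2 a a' h1 h; linarith
    · rw [veq a a' h]
  · intro i a h1 h2
    have := k5 i a h1 h2; linarith
  · intro i i' h1 h2
    rcases lt_or_eq_of_le h1 with h | h
    · have := k1 i i' h (Or.inl h2); linarith
    · rw [veq i i' h]
end

section
/- Let p, q, n, m = p+q be positive integers and let θ = Σ_{i=1}^p θ_i with θ_i = Σ_{k=p+1}^m a_{ik}(ε_i − ε_k) + Σ_{μ=1}^n b_{iμ}(ε_i − δ_μ), where a_{ik} ∈ ℤ≥0 and b_{iμ} ∈ {0,1}. Suppose a real weight Λ satisfies (Λ+ρ, ε_i − ε_k) < 0 for all i ≤ p < k ≤ m and (Λ+ρ, ε_i − δ_μ) ≤ −(i−1) for all i ≤ p, μ ≤ n. Then 2(Λ+ρ, θ) − (θ, θ) ≤ 2 Σ_{j=2}^p Σ_{μ=1}^n b_{jμ}(Σ_{i=1}^{j−1} b_{iμ} − j + 1) ≤ 0. -/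
/-- ε_i in the weight space of gl(m|n), modelled as pairs of real sequences. -/
noncomputable def epsP (i : ℕ) : (ℕ → ℝ) × (ℕ → ℝ) :=
  (fun t => if t = i then 1 else 0, fun _ => 0)

/-- δ_μ in the weight space of gl(m|n). -/
noncomputable def delP (μ : ℕ) : (ℕ → ℝ) × (ℕ → ℝ) :=
  (fun _ => 0, fun t => if t = μ then 1 else 0)

/-- The symmetric bilinear form (ε_i,ε_j)=δ_{ij}, (δ_μ,δ_ν)=−δ_{μν}, (ε_i,δ_μ)=0. -/
noncomputable def BfP (m n : ℕ) (x y : (ℕ → ℝ) × (ℕ → ℝ)) : ℝ :=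
  (∑ t ∈ Finset.Icc 1 m, x.1 t * y.1 t) - ∑ t ∈ Finset.Icc 1 n, x.2 t * y.2 t

/-- θ = Σ_{i=1}^p θ_i, θ_i = Σ_{k=p+1}^m a_{ik}(ε_i−ε_k) + Σ_{μ=1}^n b_{iμ}(ε_i−δ_μ). -/
noncomputable def thetaP (p m n : ℕ) (a bb : ℕ → ℕ → ℕ) : (ℕ → ℝ) × (ℕ → ℝ) :=
  ∑ i ∈ Finset.Icc 1 p,
    ((∑ k ∈ Finset.Icc (p+1) m, ((a i k : ℝ)) • (epsP i - epsP k))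
      + ∑ μ ∈ Finset.Icc 1 n, ((bb i μ : ℝ)) • (epsP i - delP μ))

/-!
By linearity, `(Λ+ρ, θ) = Σ_i (Σ_k a_ik (Λ+ρ, ε_i - ε_k) + Σ_μ b_iμ (Λ+ρ, ε_i - δ_μ))`, which the
hypotheses bound by `Σ_i Σ_μ b_iμ (1 - i)`. In coordinates, `θ` has `ε_i`-coefficient
`Σ_k a_ik + Σ_μ b_iμ` for `i ≤ p` and `δ_μ`-coefficient `-Σ_i b_iμ`, so for any `a, b ≥ 0`
`(θ, θ) ≥ Σ_i Σ_μ b_iμ² - Σ_μ (Σ_i b_iμ)² = -2 Σ_μ Σ_{i<j} b_iμ b_jμ`.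
Adding the two gives the first inequality (the `j = 1` term is zero). The second holds termwise,
since `b ≤ 1` gives `Σ_{i<j} b_iμ ≤ j - 1`.
-/

open Finset

lemma sq_sum_Icc_one_eq {R : Type*} [CommSemiring R] (f : ℕ → R) (p : ℕ) :
    (∑ i ∈ Icc 1 p, f i) ^ 2 =
      ∑ j ∈ Icc 1 p, (f j ^ 2 + 2 * f j * ∑ i ∈ Icc 1 (j - 1), f i) := by
  induction p with
  | zero => simp
  | succ p ih =>
    rw [sum_Icc_succ_top (by omega), sum_Icc_succ_top (by omega), Nat.add_sub_cancel, add_sq, ih]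
    ring

noncomputable def BfPRight (m n : ℕ) (x : (ℕ → ℝ) × (ℕ → ℝ)) :
    ((ℕ → ℝ) × (ℕ → ℝ)) →ₗ[ℝ] ℝ where
  toFun := BfP m n x
  map_add' y z := by
    simp only [BfP, Prod.fst_add, Prod.snd_add, Pi.add_apply, mul_add, sum_add_distrib]
    ring
  map_smul' c y := by
    simp only [BfP, Prod.smul_fst, Prod.smul_snd, Pi.smul_apply, smul_eq_mul, RingHom.id_apply,
      mul_left_comm _ c, ← mul_sum, mul_sub]

lemma BfP_thetaP_right (p m n : ℕ) (a bb : ℕ → ℕ → ℕ) (x : (ℕ → ℝ) × (ℕ → ℝ)) :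
    BfP m n x (thetaP p m n a bb) =
      ∑ i ∈ Icc 1 p, ((∑ k ∈ Icc (p + 1) m, (a i k : ℝ) * BfP m n x (epsP i - epsP k))
        + ∑ μ ∈ Icc 1 n, (bb i μ : ℝ) * BfP m n x (epsP i - delP μ)) := by
  change BfPRight m n x _ = _
  simp [thetaP, map_sum, map_add, map_smul, BfPRight]

lemma thetaP_fst_of_mem (p m n : ℕ) (a bb : ℕ → ℕ → ℕ) {t : ℕ} (ht : t ∈ Icc 1 p) :
    (thetaP p m n a bb).1 t = ∑ k ∈ Icc (p + 1) m, (a t k : ℝ) + ∑ μ ∈ Icc 1 n, (bb t μ : ℝ) := by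
  have hk : ∀ k ∈ Icc (p + 1) m, t ≠ k := fun k hk => by
    simp only [mem_Icc] at ht hk; omega
  have hsummand : ∀ i ∈ Icc 1 p, (∑ k ∈ Icc (p + 1) m, (a i k : ℝ) • (epsP i - epsP k)
      + ∑ μ ∈ Icc 1 n, (bb i μ : ℝ) • (epsP i - delP μ)).1 t =
      if t = i then ∑ k ∈ Icc (p + 1) m, (a t k : ℝ) + ∑ μ ∈ Icc 1 n, (bb t μ : ℝ) else 0 := by
    intro i _
    by_cases hti : t = i
    · subst hti
      simp +contextual [epsP, delP, Prod.fst_sum, hk]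
    · simp +contextual [epsP, delP, Prod.fst_sum, hk, hti]
  rw [thetaP, Prod.fst_sum, Finset.sum_apply, sum_congr rfl hsummand, sum_ite_eq, if_pos ht]

lemma thetaP_snd_of_mem (p m n : ℕ) (a bb : ℕ → ℕ → ℕ) {μ : ℕ} (hμ : μ ∈ Icc 1 n) :
    (thetaP p m n a bb).2 μ = -∑ i ∈ Icc 1 p, (bb i μ : ℝ) := by
  simp [thetaP, epsP, delP, Prod.snd_sum, Finset.sum_apply, hμ]

lemma BfP_thetaP_right_le (p m n : ℕ) (a bb : ℕ → ℕ → ℕ) (x : (ℕ → ℝ) × (ℕ → ℝ))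
    (h1 : ∀ i k, 1 ≤ i → i ≤ p → p + 1 ≤ k → k ≤ m → BfP m n x (epsP i - epsP k) ≤ 0)
    (h2 : ∀ i μ, 1 ≤ i → i ≤ p → 1 ≤ μ → μ ≤ n →
      BfP m n x (epsP i - delP μ) ≤ -((i : ℝ) - 1)) :
    BfP m n x (thetaP p m n a bb) ≤ ∑ i ∈ Icc 1 p, ∑ μ ∈ Icc 1 n, (bb i μ : ℝ) * (1 - i) := by
  rw [BfP_thetaP_right]
  refine sum_le_sum fun i hi => ?_
  rw [mem_Icc] at hi
  have hk : ∑ k ∈ Icc (p + 1) m, (a i k : ℝ) * BfP m n x (epsP i - epsP k) ≤ 0 :=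
    sum_nonpos fun k hk => by
      rw [mem_Icc] at hk
      exact mul_nonpos_of_nonneg_of_nonpos (Nat.cast_nonneg _) (h1 i k hi.1 hi.2 hk.1 hk.2)
  have hμ : ∑ μ ∈ Icc 1 n, (bb i μ : ℝ) * BfP m n x (epsP i - delP μ)
      ≤ ∑ μ ∈ Icc 1 n, (bb i μ : ℝ) * (1 - i) :=
    sum_le_sum fun μ hμ => by
      rw [mem_Icc] at hμ
      have := h2 i μ hi.1 hi.2 hμ.1 hμ.2
      gcongr
      linarith
  linarith

lemma neg_two_mul_sum_le_BfP_thetaP_self (p m n : ℕ) (hpm : p ≤ m) (a bb : ℕ → ℕ → ℕ) :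
    -(2 * ∑ j ∈ Icc 1 p, ∑ μ ∈ Icc 1 n, (bb j μ : ℝ) * ∑ i ∈ Icc 1 (j - 1), (bb i μ : ℝ))
      ≤ BfP m n (thetaP p m n a bb) (thetaP p m n a bb) := by
  set θ := thetaP p m n a bb
  have hfst : ∑ j ∈ Icc 1 p, ∑ μ ∈ Icc 1 n, (bb j μ : ℝ) ^ 2 ≤ ∑ t ∈ Icc 1 m, θ.1 t * θ.1 t :=
    calc ∑ j ∈ Icc 1 p, ∑ μ ∈ Icc 1 n, (bb j μ : ℝ) ^ 2
        ≤ ∑ j ∈ Icc 1 p, (∑ μ ∈ Icc 1 n, (bb j μ : ℝ)) ^ 2 :=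
          sum_le_sum fun j _ => sum_sq_le_sq_sum_of_nonneg fun _ _ => Nat.cast_nonneg _
      _ ≤ ∑ t ∈ Icc 1 p, θ.1 t * θ.1 t :=
          sum_le_sum fun t ht => by
            rw [thetaP_fst_of_mem p m n a bb ht, ← sq]
            gcongr
            exact le_add_of_nonneg_left (sum_nonneg fun _ _ => Nat.cast_nonneg _)
      _ ≤ ∑ t ∈ Icc 1 m, θ.1 t * θ.1 t :=
          sum_le_sum_of_subset_of_nonneg (Icc_subset_Icc_right hpm) fun _ _ _ => mul_self_nonneg _
  have hsnd : ∑ μ ∈ Icc 1 n, θ.2 μ * θ.2 μ = ∑ j ∈ Icc 1 p, ∑ μ ∈ Icc 1 n, (bb j μ : ℝ) ^ 2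
      + 2 * ∑ j ∈ Icc 1 p, ∑ μ ∈ Icc 1 n, (bb j μ : ℝ) * ∑ i ∈ Icc 1 (j - 1), (bb i μ : ℝ) := by
    rw [sum_congr rfl fun μ hμ => by rw [thetaP_snd_of_mem p m n a bb hμ, neg_mul_neg, ← sq,
      sq_sum_Icc_one_eq]]
    simp only [sum_add_distrib, mul_sum, mul_assoc]
    rw [sum_comm, sum_comm (s := Icc 1 n)]
  rw [BfP]
  linarith

lemma two_mul_BfP_sub_BfP_thetaP_self_le (p m n : ℕ) (hpm : p ≤ m) (a bb : ℕ → ℕ → ℕ)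
    (x : (ℕ → ℝ) × (ℕ → ℝ))
    (h1 : ∀ i k, 1 ≤ i → i ≤ p → p + 1 ≤ k → k ≤ m → BfP m n x (epsP i - epsP k) ≤ 0)
    (h2 : ∀ i μ, 1 ≤ i → i ≤ p → 1 ≤ μ → μ ≤ n →
      BfP m n x (epsP i - delP μ) ≤ -((i : ℝ) - 1)) :
    2 * BfP m n x (thetaP p m n a bb) - BfP m n (thetaP p m n a bb) (thetaP p m n a bb)
      ≤ 2 * ∑ j ∈ Icc 1 p, ∑ μ ∈ Icc 1 n,
          (bb j μ : ℝ) * ((∑ i ∈ Icc 1 (j - 1), (bb i μ : ℝ)) - j + 1) := by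
  have hx := BfP_thetaP_right_le p m n a bb x h1 h2
  have hθ := neg_two_mul_sum_le_BfP_thetaP_self p m n hpm a bb
  have hsum : ∑ j ∈ Icc 1 p, ∑ μ ∈ Icc 1 n,
        (bb j μ : ℝ) * ((∑ i ∈ Icc 1 (j - 1), (bb i μ : ℝ)) - j + 1)
      = ∑ j ∈ Icc 1 p, ∑ μ ∈ Icc 1 n, (bb j μ : ℝ) * (1 - j)
        + ∑ j ∈ Icc 1 p, ∑ μ ∈ Icc 1 n, (bb j μ : ℝ) * ∑ i ∈ Icc 1 (j - 1), (bb i μ : ℝ) := by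
    simp only [← sum_add_distrib]
    exact sum_congr rfl fun j _ => sum_congr rfl fun μ _ => by ring
  linarith

lemma sum_Icc_one_pred_le_of_le_one (b : ℕ → ℕ) (hb : ∀ i, b i ≤ 1) {j : ℕ} (hj : 1 ≤ j) :
    ∑ i ∈ Icc 1 (j - 1), (b i : ℝ) ≤ j - 1 := by
  calc ∑ i ∈ Icc 1 (j - 1), (b i : ℝ) ≤ #(Icc 1 (j - 1)) • (1 : ℝ) :=
        sum_le_card_nsmul _ _ _ fun i _ => by exact_mod_cast hb i
    _ = j - 1 := by simp [Nat.cast_sub hj]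

theorem theta_estimate_general (p q n m : ℕ) (hm : m = p + q)
    (a bb : ℕ → ℕ → ℕ) (hbb : ∀ i μ, bb i μ ≤ 1)
    (Lr : (ℕ → ℝ) × (ℕ → ℝ))
    (h1 : ∀ i k, 1 ≤ i → i ≤ p → p + 1 ≤ k → k ≤ m →
      BfP m n Lr (epsP i - epsP k) < 0)
    (h2 : ∀ i μ, 1 ≤ i → i ≤ p → 1 ≤ μ → μ ≤ n →
      BfP m n Lr (epsP i - delP μ) ≤ -((i : ℝ) - 1)) :
    2 * BfP m n Lr (thetaP p m n a bb) - BfP m n (thetaP p m n a bb) (thetaP p m n a bb)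
      ≤ 2 * ∑ j ∈ Finset.Icc 2 p, ∑ μ ∈ Finset.Icc 1 n,
          (bb j μ : ℝ) * ((∑ i ∈ Finset.Icc 1 (j-1), (bb i μ : ℝ)) - (j : ℝ) + 1) ∧
    2 * (∑ j ∈ Finset.Icc 2 p, ∑ μ ∈ Finset.Icc 1 n,
          (bb j μ : ℝ) * ((∑ i ∈ Finset.Icc 1 (j-1), (bb i μ : ℝ)) - (j : ℝ) + 1)) ≤ 0 := by
  have hpm : p ≤ m := hm ▸ Nat.le_add_right p q
  have hsum_from_two : ∑ j ∈ Icc 2 p, ∑ μ ∈ Icc 1 n,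
        (bb j μ : ℝ) * ((∑ i ∈ Icc 1 (j - 1), (bb i μ : ℝ)) - j + 1)
      = ∑ j ∈ Icc 1 p, ∑ μ ∈ Icc 1 n,
        (bb j μ : ℝ) * ((∑ i ∈ Icc 1 (j - 1), (bb i μ : ℝ)) - j + 1) :=
    sum_subset (Icc_subset_Icc_left one_le_two) fun j hj hj2 => by
      obtain rfl : j = 1 := by simp only [mem_Icc] at hj hj2; omega
      simp
  refine ⟨?_, ?_⟩
  · rw [hsum_from_two]
    exact two_mul_BfP_sub_BfP_thetaP_self_le p m n hpm a bb Lr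
      (fun i k hi hip hk hkm => (h1 i k hi hip hk hkm).le) h2
  · have hterm : ∀ j ∈ Icc 2 p, ∀ μ ∈ Icc 1 n,
        (bb j μ : ℝ) * ((∑ i ∈ Icc 1 (j - 1), (bb i μ : ℝ)) - j + 1) ≤ 0 := by
      intro j hj μ _
      have hj1 : 1 ≤ j := by simp only [mem_Icc] at hj; omega
      have := sum_Icc_one_pred_le_of_le_one (bb · μ) (hbb · μ) hj1
      exact mul_nonpos_of_nonneg_of_nonpos (Nat.cast_nonneg _) (by linarith)
    linarith [sum_nonpos fun j hj => sum_nonpos (hterm j hj)]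

/-- If (Λ+ρ, ε_i−ε_k) < 0 for all i ≤ p < k ≤ m and (Λ+ρ, ε_i−δ_μ) ≤ −(i−1), with
a_{ik} ∈ ℤ≥0 and b_{iμ} ∈ {0,1}, then
2(Λ+ρ, θ) − (θ, θ) ≤ 2 Σ_{j=2}^p Σ_{μ=1}^n b_{jμ}(Σ_{i=1}^{j−1} b_{iμ} − j + 1) ≤ 0. -/
theorem theta_estimate (p q n m : ℕ) (hm : m = p + q)
    (hp : 1 ≤ p) (hq : 1 ≤ q) (hn : 1 ≤ n)
    (a bb : ℕ → ℕ → ℕ) (hbb : ∀ i μ, bb i μ ≤ 1)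
    (Lr : (ℕ → ℝ) × (ℕ → ℝ))
    (h1 : ∀ i k, 1 ≤ i → i ≤ p → p + 1 ≤ k → k ≤ m →
      BfP m n Lr (epsP i - epsP k) < 0)
    (h2 : ∀ i μ, 1 ≤ i → i ≤ p → 1 ≤ μ → μ ≤ n →
      BfP m n Lr (epsP i - delP μ) ≤ -((i : ℝ) - 1)) :
    2 * BfP m n Lr (thetaP p m n a bb) - BfP m n (thetaP p m n a bb) (thetaP p m n a bb)
      ≤ 2 * ∑ j ∈ Finset.Icc 2 p, ∑ μ ∈ Finset.Icc 1 n,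
          (bb j μ : ℝ) * ((∑ i ∈ Finset.Icc 1 (j-1), (bb i μ : ℝ)) - (j : ℝ) + 1) ∧
    2 * (∑ j ∈ Finset.Icc 2 p, ∑ μ ∈ Finset.Icc 1 n,
          (bb j μ : ℝ) * ((∑ i ∈ Finset.Icc 1 (j-1), (bb i μ : ℝ)) - (j : ℝ) + 1)) ≤ 0 :=
  theta_estimate_general p q n m hm a bb hbb Lr h1 h2
end
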